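/- Let C be a braided monoidal category containing a symmetric subcategory A, with degree-a morphisms f : c →_a c' given by mates f̄ : a⊗c → c'. Define two tensor products on such morphisms: f₁ ⊗ f₂ with mate (f̄₁⊗f̄₂) ∘ (id_{a₁} ⊗ β_{a₂,c₁} ⊗ id_{c₂}), and f₁ ⊗^β f₂ with mate (f̄₁⊗f̄₂) ∘ (id_{a₁} ⊗ β⁻¹_{c₁,a₂} ⊗ id_{c₂}). Then the braiding of C induces a natural isomorphism: for all f₁ : c₁ →_{a₁} c₁' and f₂ : c₂ →_{a₂} c₂', the equation β_{c₁',c₂'} ∘ mate(f₁ ⊗^β f₂) = mate(f₂ ⊗ f₁) ∘ (β_{a₁,a₂} ⊗ β_{c₁,c₂}) holds as morphisms a₁⊗a₂⊗c₁⊗c₂ → c₂'⊗c₁'. -/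

import Mathlib

/-!
Both mates factor through the interchange isomorphisms of the tensor functor:
`mate(f₁ ⊗^β f₂) = tensorδ ≫ (f₁ ⊗ f₂)` and `mate(f₂ ⊗ f₁) = tensorμ ≫ (f₂ ⊗ f₁)`.
Naturality of the braiding moves `β_{c₁',c₂'}` past `f₁ ⊗ f₂`, which leaves an identity between
structure morphisms. In it, the crossing `β⁻¹_{c₁,a₂}` of `tensorδ` cancels against the crossing
of `c₁` and `a₂` inside `β_{a₁⊗c₁, a₂⊗c₂}`, and the three remaining crossings are those of
`(β_{a₁,a₂} ⊗ β_{c₁,c₂}) ≫ tensorμ`.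
-/

open CategoryTheory MonoidalCategory

section

variable {C : Type*} [Category C] [MonoidalCategory C] [BraidedCategory C]

/-- Mate of the tensor product `f₁ ⊗ f₂` of degree-graded morphisms, defined using the
braiding `β_{a₂,c₁}`. -/
def mateTensor {a₁ a₂ c₁ c₂ c₁' c₂' : C} (f₁ : a₁ ⊗ c₁ ⟶ c₁') (f₂ : a₂ ⊗ c₂ ⟶ c₂') :
    (a₁ ⊗ a₂) ⊗ (c₁ ⊗ c₂) ⟶ c₁' ⊗ c₂' :=
  (α_ a₁ a₂ (c₁ ⊗ c₂)).hom ≫ (a₁ ◁ (α_ a₂ c₁ c₂).inv) ≫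
    (a₁ ◁ ((β_ a₂ c₁).hom ▷ c₂)) ≫ (a₁ ◁ (α_ c₁ a₂ c₂).hom) ≫
      (α_ a₁ c₁ (a₂ ⊗ c₂)).inv ≫ (f₁ ⊗ₘ f₂)

/-- Mate of the tensor product `f₁ ⊗^β f₂` of degree-graded morphisms, defined using the
inverse braiding `β⁻¹_{c₁,a₂}`. -/
def mateTensorBeta {a₁ a₂ c₁ c₂ c₁' c₂' : C} (f₁ : a₁ ⊗ c₁ ⟶ c₁') (f₂ : a₂ ⊗ c₂ ⟶ c₂') :
    (a₁ ⊗ a₂) ⊗ (c₁ ⊗ c₂) ⟶ c₁' ⊗ c₂' :=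
  (α_ a₁ a₂ (c₁ ⊗ c₂)).hom ≫ (a₁ ◁ (α_ a₂ c₁ c₂).inv) ≫
    (a₁ ◁ ((β_ c₁ a₂).inv ▷ c₂)) ≫ (a₁ ◁ (α_ c₁ a₂ c₂).hom) ≫
      (α_ a₁ c₁ (a₂ ⊗ c₂)).inv ≫ (f₁ ⊗ₘ f₂)

theorem mateTensor_eq_tensorμ_comp {a₁ a₂ c₁ c₂ c₁' c₂' : C} (f₁ : a₁ ⊗ c₁ ⟶ c₁')
    (f₂ : a₂ ⊗ c₂ ⟶ c₂') : mateTensor f₁ f₂ = tensorμ a₁ a₂ c₁ c₂ ≫ (f₁ ⊗ₘ f₂) := by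
  simp only [mateTensor, tensorμ, Category.assoc]

theorem mateTensorBeta_eq_tensorδ_comp {a₁ a₂ c₁ c₂ c₁' c₂' : C} (f₁ : a₁ ⊗ c₁ ⟶ c₁')
    (f₂ : a₂ ⊗ c₂ ⟶ c₂') : mateTensorBeta f₁ f₂ = tensorδ a₁ c₁ a₂ c₂ ≫ (f₁ ⊗ₘ f₂) := by
  simp only [mateTensorBeta, tensorδ, Category.assoc]

theorem tensorδ_comp_braiding_hom (X₁ X₂ Y₁ Y₂ : C) :
    tensorδ X₁ Y₁ X₂ Y₂ ≫ (β_ (X₁ ⊗ Y₁) (X₂ ⊗ Y₂)).hom =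
      ((β_ X₁ X₂).hom ⊗ₘ (β_ Y₁ Y₂).hom) ≫ tensorμ X₂ X₁ Y₂ Y₁ := by
  simp [tensorδ, tensorμ, MonoidalCategory.tensorHom_def]

theorem braiding_intertwines_tensor_products_general
    {a₁ a₂ c₁ c₂ c₁' c₂' : C}
    (f₁ : a₁ ⊗ c₁ ⟶ c₁') (f₂ : a₂ ⊗ c₂ ⟶ c₂') :
    mateTensorBeta f₁ f₂ ≫ (β_ c₁' c₂').hom =
      ((β_ a₁ a₂).hom ⊗ₘ (β_ c₁ c₂).hom) ≫ mateTensor f₂ f₁ := by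
  rw [mateTensorBeta_eq_tensorδ_comp, mateTensor_eq_tensorμ_comp, Category.assoc,
    BraidedCategory.braiding_naturality, ← Category.assoc, tensorδ_comp_braiding_hom,
    Category.assoc]

/-- In a braided monoidal category `C` containing a symmetric subcategory
`A`, the braiding of `C` intertwines the two tensor products `⊗` and `⊗^β` of degree-graded
morphisms: for all `f₁ : c₁ →_{a₁} c₁'` and `f₂ : c₂ →_{a₂} c₂'`,
`β_{c₁',c₂'} ∘ mate(f₁ ⊗^β f₂) = mate(f₂ ⊗ f₁) ∘ (β_{a₁,a₂} ⊗ β_{c₁,c₂})` as morphisms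
`(a₁⊗a₂)⊗(c₁⊗c₂) ⟶ c₂'⊗c₁'`. -/
theorem braiding_intertwines_tensor_products
    (A : Set C) (hunit : 𝟙_ C ∈ A) (htens : ∀ a a' : C, a ∈ A → a' ∈ A → a ⊗ a' ∈ A)
    (hsym : ∀ a ∈ A, ∀ a' ∈ A, (β_ a a').hom ≫ (β_ a' a).hom = 𝟙 (a ⊗ a'))
    {a₁ a₂ c₁ c₂ c₁' c₂' : C} (ha₁ : a₁ ∈ A) (ha₂ : a₂ ∈ A)
    (f₁ : a₁ ⊗ c₁ ⟶ c₁') (f₂ : a₂ ⊗ c₂ ⟶ c₂') :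
    mateTensorBeta f₁ f₂ ≫ (β_ c₁' c₂').hom =
      ((β_ a₁ a₂).hom ⊗ₘ (β_ c₁ c₂).hom) ≫ mateTensor f₂ f₁ :=
  braiding_intertwines_tensor_products_general f₁ f₂

end
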